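/- arXiv:1107.3479 — 7 statements merged into one kernel-verified Lean document; each statement's English description precedes it below -/
import Mathlib

section
/- For every complex number s with s ∉ {1, 0, −1, −2}, one has 4π²·ζ(s)·ζ(−1−s) = −s·(s+1)·ζ(1−s)·ζ(s+2). -/
open Complex

theorem stmt_2 (s : ℂ) (hs : s ∉ ({1, 0, -1, -2} : Set ℂ)) :
    4 * (Real.pi : ℂ) ^ 2 * riemannZeta s * riemannZeta (-1 - s) =
      -s * (s + 1) * riemannZeta (1 - s) * riemannZeta (s + 2) := by
  simp only [Set.mem_insert_iff, Set.mem_singleton_iff, not_or] at hs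
  obtain ⟨h1, h0, hm1, hm2⟩ := hs
  have hpi : (2 * (Real.pi : ℂ)) ≠ 0 := by
    simp [Real.pi_ne_zero, Complex.ofReal_ne_zero]
  by_cases hA : ∀ n : ℕ, s ≠ -n
  · -- forward case: express ζ(1-s), ζ(-1-s) via ζ(s), ζ(s+2)
    have hA2 : ∀ n : ℕ, s + 2 ≠ -n := by
      intro n h
      apply hA (n + 2)
      push_cast
      linear_combination h
    have e1 := riemannZeta_one_sub hA h1
    have e2 := riemannZeta_one_sub hA2 (by intro h; apply hm1; linear_combination h)
    rw [show (1 : ℂ) - (s + 2) = -1 - s by ring] at e2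
    rw [e1, e2]
    have hg : Complex.Gamma (s + 2) = (s + 1) * s * Complex.Gamma s := by
      rw [show s + 2 = (s + 1) + 1 by ring,
        Complex.Gamma_add_one _ (by intro h; apply hm1; linear_combination h),
        Complex.Gamma_add_one _ h0]
      ring
    have hc : Complex.cos ((Real.pi : ℂ) * (s + 2) / 2) =
        -Complex.cos ((Real.pi : ℂ) * s / 2) := by
      rw [show (Real.pi : ℂ) * (s + 2) / 2 = (Real.pi : ℂ) * s / 2 + Real.pi by ring,
        Complex.cos_add]
      simp
    have hp : (2 * (Real.pi : ℂ)) ^ (-(s + 2)) =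
        (2 * (Real.pi : ℂ)) ^ (-s) * ((2 * (Real.pi : ℂ)) ^ (2 : ℕ))⁻¹ := by
      rw [show -(s + 2) = -s + (-((2 : ℕ) : ℂ)) by push_cast; ring,
        Complex.cpow_add _ _ hpi]
      congr 1
      rw [Complex.cpow_neg, Complex.cpow_natCast]
    rw [hg, hc, hp]
    field_simp
    ring
  · -- s = -n for some natural n ≥ 3
    push_neg at hA
    obtain ⟨n, rfl⟩ := hA
    have hnn : 3 ≤ n := by
      by_contra h
      push_neg at h
      interval_cases n <;> simp_all <;> norm_num at *
    have hn : (3 : ℝ) ≤ n := by exact_mod_cast hnn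
    have hn0 : ((n : ℂ)) ≠ 0 := by
      intro h; apply h0; rw [h]; ring
    have hn1 : (-1 : ℂ) - -(n : ℂ) ≠ 0 := by
      intro h
      have := congrArg Complex.re h
      simp at this
      linarith
    have hne1 : ∀ m : ℕ, (1 : ℂ) - -(n : ℂ) ≠ -m := by
      intro m h
      have := congrArg Complex.re h
      push_cast at this
      simp at this
      have : (0 : ℝ) ≤ (m : ℝ) := Nat.cast_nonneg m
      linarith
    have hne2 : ∀ m : ℕ, (-1 : ℂ) - -(n : ℂ) ≠ -m := by
      intro m h
      have := congrArg Complex.re h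
      push_cast at this
      simp at this
      have : (0 : ℝ) ≤ (m : ℝ) := Nat.cast_nonneg m
      linarith
    have e1 := riemannZeta_one_sub hne1 (by
      intro h
      apply h0
      have : -(n : ℂ) = 0 := by linear_combination -h
      exact this)
    rw [show (1 : ℂ) - (1 - -(n : ℂ)) = -(n : ℂ) by ring] at e1
    have e2 := riemannZeta_one_sub hne2 (by
      intro h; apply hm2; linear_combination -h)
    rw [show (1 : ℂ) - (-1 - -(n : ℂ)) = -(n : ℂ) + 2 by ring] at e2
    rw [e1, e2]
    have hg : Complex.Gamma (1 - -(n : ℂ)) =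
        (n : ℂ) * ((-1 : ℂ) - -(n : ℂ)) * Complex.Gamma ((-1 : ℂ) - -(n : ℂ)) := by
      rw [show (1 : ℂ) - -(n : ℂ) = ((-1 : ℂ) - -(n : ℂ)) + 1 + 1 by ring,
        Complex.Gamma_add_one _ (by intro h; apply hn0; linear_combination h),
        Complex.Gamma_add_one _ hn1]
      ring
    have hc : Complex.cos ((Real.pi : ℂ) * (1 - -(n : ℂ)) / 2) =
        -Complex.cos ((Real.pi : ℂ) * (-1 - -(n : ℂ)) / 2) := by
      rw [show (Real.pi : ℂ) * (1 - -(n : ℂ)) / 2 =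
        (Real.pi : ℂ) * (-1 - -(n : ℂ)) / 2 + Real.pi by push_cast; ring,
        Complex.cos_add]
      simp
    have hp : (2 * (Real.pi : ℂ)) ^ (-(1 - -(n : ℂ))) =
        (2 * (Real.pi : ℂ)) ^ (-(-1 - -(n : ℂ))) * ((2 * (Real.pi : ℂ)) ^ (2 : ℕ))⁻¹ := by
      rw [show -(1 - -(n : ℂ)) = -(-1 - -(n : ℂ)) + (-((2 : ℕ) : ℂ)) by push_cast; ring,
        Complex.cpow_add _ _ hpi]
      congr 1
      rw [Complex.cpow_neg, Complex.cpow_natCast]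
    rw [hg, hc, hp]
    field_simp
    ring
end

section
/- For every complex number s with s ∉ {−4, −3, −2, −1, 0, 1, 2} and with ζ(1−s) ≠ 0, ζ(s+2) ≠ 0, ζ(−s) ≠ 0, ζ(s+3) ≠ 0, ζ(2−s) ≠ 0, ζ(s+1) ≠ 0, ζ(−1−s) ≠ 0, ζ(s+4) ≠ 0, one has 0 = −3·ζ(s)·ζ(−1−s)/(ζ(1−s)·ζ(s+2)) + 3·ζ(s+1)·ζ(−2−s)/(ζ(−s)·ζ(s+3)) + ζ(s−1)·ζ(−s)/(ζ(2−s)·ζ(s+1)) − ζ(s+2)·ζ(−3−s)/(ζ(−1−s)·ζ(s+4)). -/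
/-! Since the completed zeta function `Λ = Γℝ · ζ` satisfies `Λ(1 - z) = Λ(z)`, the cross-ratio
`ζ(z) ζ(-1-z) / (ζ(1-z) ζ(z+2))` is a ratio of `Γℝ` values, and `Γℝ(w + 2) = Γℝ(w) · w / (2π)`
evaluates it to the quadratic polynomial `-z(z+1)/(4π²)`. The relation is minus the third finite
difference of this polynomial at `s - 1`, hence zero. -/

open Complex Real

lemma riemannZeta_one_sub_div_riemannZeta {z : ℂ} (hz0 : z ≠ 0) (hz1 : z ≠ 1)
    (hζ : riemannZeta z ≠ 0) :
    riemannZeta (1 - z) / riemannZeta z = Gammaℝ z / Gammaℝ (1 - z) := by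
  have hΛ : completedRiemannZeta z ≠ 0 := by
    rintro h
    exact hζ (by rw [riemannZeta_def_of_ne_zero hz0, h, zero_div])
  rw [riemannZeta_def_of_ne_zero hz0, riemannZeta_def_of_ne_zero (sub_ne_zero.mpr hz1.symm),
    completedRiemannZeta_one_sub, div_div_div_cancel_left' _ _ hΛ]

/-- `Γℝ w = π^(-w/2) Γ(w/2)` takes the junk value `0` at the poles `w = -2n`; for `n ≥ 2` these
are detected by the trivial zeros `ζ(w + 2) = 0`. -/
lemma Gammaℝ_ne_zero_of_riemannZeta_add_two_ne_zero {w : ℂ} (hw0 : w ≠ 0) (hw2 : w ≠ -2)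
    (hζ : riemannZeta (w + 2) ≠ 0) : Gammaℝ w ≠ 0 := by
  rw [Ne, Gammaℝ_eq_zero_iff]
  rintro ⟨_ | _ | n, rfl⟩
  · simp at hw0
  · norm_num at hw2
  · refine hζ ?_
    convert riemannZeta_neg_two_mul_nat_add_one n using 2
    push_cast
    ring

lemma Gammaℝ_add_two_div_Gammaℝ {w : ℂ} (hw : w ≠ 0) (hG : Gammaℝ w ≠ 0) :
    Gammaℝ (w + 2) / Gammaℝ w = w / (2 * π) := by
  rw [Gammaℝ_add_two hw]
  field_simp

lemma riemannZeta_cross_ratio {z : ℂ} (hz : z ∉ ({-2, -1, 0, 1} : Set ℂ))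
    (h₁ : riemannZeta (1 - z) ≠ 0) (h₂ : riemannZeta (z + 2) ≠ 0) :
    riemannZeta z * riemannZeta (-1 - z) / (riemannZeta (1 - z) * riemannZeta (z + 2)) =
      -z * (z + 1) / (4 * π ^ 2) := by
  simp only [Set.mem_insert_iff, Set.mem_singleton_iff, not_or] at hz
  obtain ⟨hz_ne_neg_two, hz_ne_neg_one, hz_ne_zero, hz_ne_one⟩ := hz
  have hneg_ne_zero : -1 - z ≠ 0 := fun h => hz_ne_neg_one (by linear_combination -h)
  have hneg_add_two : -1 - z + 2 = 1 - z := by ring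
  have hGz : Gammaℝ z ≠ 0 :=
    Gammaℝ_ne_zero_of_riemannZeta_add_two_ne_zero hz_ne_zero hz_ne_neg_two h₂
  have hGneg : Gammaℝ (-1 - z) ≠ 0 :=
    Gammaℝ_ne_zero_of_riemannZeta_add_two_ne_zero hneg_ne_zero
      (fun h => hz_ne_one (by linear_combination -h)) (hneg_add_two ▸ h₁)
  have hζz : riemannZeta z / riemannZeta (1 - z) = Gammaℝ (1 - z) / Gammaℝ z := by
    simpa only [sub_sub_cancel] using riemannZeta_one_sub_div_riemannZeta
      (sub_ne_zero.mpr (Ne.symm hz_ne_one)) (by simpa using hz_ne_zero) h₁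
  have hζw : riemannZeta (-1 - z) / riemannZeta (z + 2) = Gammaℝ (z + 2) / Gammaℝ (-1 - z) := by
    have h1z : (1 : ℂ) - (z + 2) = -1 - z := by ring
    simpa only [h1z] using riemannZeta_one_sub_div_riemannZeta
      (fun h => hz_ne_neg_two (by linear_combination h))
      (fun h => hz_ne_neg_one (by linear_combination h)) h₂
  calc riemannZeta z * riemannZeta (-1 - z) / (riemannZeta (1 - z) * riemannZeta (z + 2))
      = Gammaℝ (z + 2) / Gammaℝ z * (Gammaℝ (-1 - z + 2) / Gammaℝ (-1 - z)) := by
        rw [mul_div_mul_comm, hζz, hζw, hneg_add_two, div_mul_div_comm, div_mul_div_comm, mul_comm]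
    _ = z / (2 * π) * ((-1 - z) / (2 * π)) := by
        rw [Gammaℝ_add_two_div_Gammaℝ hz_ne_zero hGz, Gammaℝ_add_two_div_Gammaℝ hneg_ne_zero hGneg]
    _ = -z * (z + 1) / (4 * π ^ 2) := by ring

theorem stmt_7 (s : ℂ) (hs : s ∉ ({-4, -3, -2, -1, 0, 1, 2} : Set ℂ))
    (h1 : riemannZeta (1 - s) ≠ 0) (h2 : riemannZeta (s + 2) ≠ 0)
    (h3 : riemannZeta (-s) ≠ 0) (h4 : riemannZeta (s + 3) ≠ 0)
    (h5 : riemannZeta (2 - s) ≠ 0) (h6 : riemannZeta (s + 1) ≠ 0)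
    (h7 : riemannZeta (-1 - s) ≠ 0) (h8 : riemannZeta (s + 4) ≠ 0) :
    0 =
      -3 * (riemannZeta s * riemannZeta (-1 - s)) /
          (riemannZeta (1 - s) * riemannZeta (s + 2)) +
        3 * (riemannZeta (s + 1) * riemannZeta (-2 - s)) /
          (riemannZeta (-s) * riemannZeta (s + 3)) +
        riemannZeta (s - 1) * riemannZeta (-s) /
          (riemannZeta (2 - s) * riemannZeta (s + 1)) -
        riemannZeta (s + 2) * riemannZeta (-3 - s) /
          (riemannZeta (-1 - s) * riemannZeta (s + 4)) := by
  have shift (k : ℂ) (hk : k ∈ ({-1, 0, 1, 2} : Set ℂ)) :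
      s + k ∉ ({-2, -1, 0, 1} : Set ℂ) := by
    intro h
    apply hs
    simp only [Set.mem_insert_iff, Set.mem_singleton_iff] at hk h ⊢
    grind
  have ratio := riemannZeta_cross_ratio (by simpa using shift 0 (by simp)) h1 h2
  have ratio_add_one : riemannZeta (s + 1) * riemannZeta (-2 - s) /
      (riemannZeta (-s) * riemannZeta (s + 3)) = -(s + 1) * (s + 2) / (4 * π ^ 2) := by
    convert riemannZeta_cross_ratio (shift 1 (by simp)) (by convert h3 using 2; ring)
      (by convert h4 using 2; ring) using 2 <;> ring_nf
  have ratio_sub_one : riemannZeta (s - 1) * riemannZeta (-s) /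
      (riemannZeta (2 - s) * riemannZeta (s + 1)) = -(s - 1) * s / (4 * π ^ 2) := by
    convert riemannZeta_cross_ratio (shift (-1) (by simp)) (by convert h5 using 2; ring)
      (by convert h6 using 2; ring) using 2 <;> ring_nf
  have ratio_add_two : riemannZeta (s + 2) * riemannZeta (-3 - s) /
      (riemannZeta (-1 - s) * riemannZeta (s + 4)) = -(s + 2) * (s + 3) / (4 * π ^ 2) := by
    convert riemannZeta_cross_ratio (shift 2 (by simp)) (by convert h7 using 2; ring)
      (by convert h8 using 2; ring) using 2 <;> ring_nf
  rw [mul_div_assoc (-3 : ℂ), mul_div_assoc (3 : ℂ), ratio, ratio_add_one,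
    ratio_add_two, ratio_sub_one]
  ring
end

section
/- Let s be a complex number and α a real number such that s ∉ {−1, 0, 1}, s + iα ∉ {−1, 0, 1}, ζ(−s) ≠ 0, and the quantity D = −2πi·tanh(πα/2)·ζ(s+iα)·ζ(−s−iα) + (s+iα)·ζ(1+s+iα)·ζ(1−s−iα) is nonzero. Then ζ(s) = s·ζ(1−s)·ζ(1+s)·[ i·(s+iα)·tanh(πα/2)·ζ(1−s−iα)·ζ(1+s+iα) + 2π·ζ(s+iα)·ζ(−s−iα) ] / ( 2π·ζ(−s)·D ). -/
open Complex
open scoped Real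

/-!
Writing `ζ = Λ / Γℝ` with the completed zeta function `Λ`, the reflection formula for `Γ` shows
that `ζ(z) ζ(-z)` and `ζ(1 - z) ζ(1 + z)` are the multiples `-z sin(πz/2) / (2π)` and
`cos(πz/2)` of the same quantity `Λ(z) Λ(-z)`, since `Λ(1 - z) = Λ(z)`. Hence
`2π cos(πz/2) ζ(z) ζ(-z) = -z sin(πz/2) ζ(1 - z) ζ(1 + z)` for `z ∉ {-1, 0, 1}`.

At `z = s + iα`, expanding `cos` and `sin` of `πs/2 + i πα/2` and dividing by `cosh(πα/2)` turns
this into `cos(πs/2) N + sin(πs/2) D = 0`, where `N` is the bracket in the numerator and `D` the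
denominator factor of the claimed formula. As `D ≠ 0`, also `cos(πs/2) ≠ 0`, and eliminating
`tan(πs/2)` between this relation and the one at `z = s` gives the formula.
-/

-- At `z = 0` and at even `z` both sides are `0`: `Gamma` is `0` at its poles and `x / 0 = 0`.
lemma Gammaℝ_mul_Gammaℝ_neg (z : ℂ) :
    Gammaℝ z * Gammaℝ (-z) = -2 * π / (z * sin (π * z / 2)) := by
  rcases eq_or_ne z 0 with rfl | hz
  · simp [Gammaℝ_def]
  have hpow : (π : ℂ) ^ (-z / 2) * (π : ℂ) ^ (-(-z) / 2) = 1 := by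
    rw [← cpow_add _ _ (ofReal_ne_zero.mpr Real.pi_ne_zero), show -z / 2 + -(-z) / 2 = 0 by ring,
      cpow_zero]
  have hrefl := Complex.Gamma_mul_Gamma_one_sub (z / 2)
  rw [show 1 - z / 2 = -z / 2 + 1 by ring, Gamma_add_one _ (by simpa using hz)] at hrefl
  calc Gammaℝ z * Gammaℝ (-z)
  _ = Gamma (z / 2) * Gamma (-z / 2) := by
    simp only [Gammaℝ_def]
    linear_combination (Gamma (z / 2) * Gamma (-z / 2)) * hpow
  _ = π / sin (π * (z / 2)) / (-z / 2) :=
    eq_div_of_mul_eq (by simpa using hz) (by rw [← hrefl]; ring)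
  _ = _ := by
    rw [mul_div_assoc']
    ring

lemma riemannZeta_mul_riemannZeta_neg {z : ℂ} (hz : z ≠ 0) :
    riemannZeta z * riemannZeta (-z) =
      -(z * sin (π * z / 2)) / (2 * π) *
        (completedRiemannZeta z * completedRiemannZeta (-z)) := by
  rw [riemannZeta_def_of_ne_zero hz, riemannZeta_def_of_ne_zero (neg_ne_zero.mpr hz),
    div_mul_div_comm, Gammaℝ_mul_Gammaℝ_neg, div_div_eq_mul_div]
  ring

lemma riemannZeta_one_sub_mul_riemannZeta_one_add {z : ℂ} (h1 : z ≠ 1) (hm1 : z ≠ -1) :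
    riemannZeta (1 - z) * riemannZeta (1 + z) =
      cos (π * z / 2) * (completedRiemannZeta z * completedRiemannZeta (-z)) := by
  rw [riemannZeta_def_of_ne_zero (sub_ne_zero.mpr h1.symm),
    riemannZeta_def_of_ne_zero (fun h ↦ hm1 (by linear_combination h)),
    completedRiemannZeta_one_sub, show 1 + z = 1 - -z by ring, completedRiemannZeta_one_sub,
    div_mul_div_comm, show 1 - -z = 1 + z by ring, Gammaℝ_one_sub_mul_Gammaℝ_one_add,
    div_inv_eq_mul]
  ring

lemma two_pi_mul_cos_mul_riemannZeta_mul_riemannZeta_neg {z : ℂ} (h0 : z ≠ 0) (h1 : z ≠ 1)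
    (hm1 : z ≠ -1) :
    2 * π * cos (π * z / 2) * riemannZeta z * riemannZeta (-z) =
      -z * sin (π * z / 2) * riemannZeta (1 - z) * riemannZeta (1 + z) := by
  have hneg : 2 * π * (riemannZeta z * riemannZeta (-z)) =
      -(z * sin (π * z / 2)) * (completedRiemannZeta z * completedRiemannZeta (-z)) := by
    rw [riemannZeta_mul_riemannZeta_neg h0]
    field_simp
  have hsym := riemannZeta_one_sub_mul_riemannZeta_one_add h1 hm1
  linear_combination cos (π * z / 2) * hneg + z * sin (π * z / 2) * hsym

lemma cos_mul_add_sin_mul_eq_zero (s : ℂ) (α : ℝ) (h0 : s + I * α ≠ 0) (h1 : s + I * α ≠ 1)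
    (hm1 : s + I * α ≠ -1) :
    cos (π * s / 2) *
        (I * (s + I * α) * tanh (π * α / 2) * riemannZeta (1 - s - I * α) *
            riemannZeta (1 + s + I * α) +
          2 * π * riemannZeta (s + I * α) * riemannZeta (-s - I * α)) +
      sin (π * s / 2) *
        (-2 * π * I * tanh (π * α / 2) * riemannZeta (s + I * α) * riemannZeta (-s - I * α) +
          (s + I * α) * riemannZeta (1 + s + I * α) * riemannZeta (1 - s - I * α)) = 0 := by
  have hcosh : cosh (π * α / 2) ≠ 0 := by
    rw [← ofReal_ofNat, ← ofReal_mul, ← ofReal_div, ← ofReal_cosh]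
    exact_mod_cast (Real.cosh_pos _).ne'
  have hsinh : sinh (π * α / 2) = tanh (π * α / 2) * cosh (π * α / 2) := by
    rw [tanh_eq_sinh_div_cosh, div_mul_cancel₀ _ hcosh]
  have hw := two_pi_mul_cos_mul_riemannZeta_mul_riemannZeta_neg h0 h1 hm1
  rw [show π * (s + I * α) / 2 = π * s / 2 + π * α / 2 * I by ring, cos_add_mul_I,
    sin_add_mul_I, hsinh, neg_add', ← sub_sub, ← add_assoc] at hw
  apply mul_left_cancel₀ hcosh
  linear_combination hw

theorem stmt_8 (s : ℂ) (α : ℝ)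
    (hs : s ∉ ({-1, 0, 1} : Set ℂ))
    (hsa : s + Complex.I * α ∉ ({-1, 0, 1} : Set ℂ))
    (hz : riemannZeta (-s) ≠ 0)
    (hD : -2 * (Real.pi : ℂ) * Complex.I * Complex.tanh ((Real.pi : ℂ) * α / 2) *
            riemannZeta (s + Complex.I * α) * riemannZeta (-s - Complex.I * α) +
          (s + Complex.I * α) * riemannZeta (1 + s + Complex.I * α) *
            riemannZeta (1 - s - Complex.I * α) ≠ 0) :
    riemannZeta s =
      s * riemannZeta (1 - s) * riemannZeta (1 + s) *
          (Complex.I * (s + Complex.I * α) * Complex.tanh ((Real.pi : ℂ) * α / 2) *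
              riemannZeta (1 - s - Complex.I * α) * riemannZeta (1 + s + Complex.I * α) +
            2 * (Real.pi : ℂ) * riemannZeta (s + Complex.I * α) *
              riemannZeta (-s - Complex.I * α)) /
        (2 * (Real.pi : ℂ) * riemannZeta (-s) *
          (-2 * (Real.pi : ℂ) * Complex.I * Complex.tanh ((Real.pi : ℂ) * α / 2) *
              riemannZeta (s + Complex.I * α) * riemannZeta (-s - Complex.I * α) +
            (s + Complex.I * α) * riemannZeta (1 + s + Complex.I * α) *
              riemannZeta (1 - s - Complex.I * α))) := by
  simp only [Set.mem_insert_iff, Set.mem_singleton_iff, not_or] at hs hsa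
  obtain ⟨hm1, h0, h1⟩ := hs
  obtain ⟨hm1', h0', h1'⟩ := hsa
  have hzeta := two_pi_mul_cos_mul_riemannZeta_mul_riemannZeta_neg h0 h1 hm1
  have hshift := cos_mul_add_sin_mul_eq_zero s α h0' h1' hm1'
  set D := -2 * (π : ℂ) * I * tanh (π * α / 2) * riemannZeta (s + I * α) *
      riemannZeta (-s - I * α) +
    (s + I * α) * riemannZeta (1 + s + I * α) * riemannZeta (1 - s - I * α)
  have hcos : cos (π * s / 2) ≠ 0 := by
    intro hcos
    have hsin : sin (π * s / 2) ≠ 0 := by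
      intro hsin
      simpa [hsin, hcos] using sin_sq_add_cos_sq (π * s / 2)
    rw [hcos, zero_mul, zero_add] at hshift
    exact hD ((mul_eq_zero.mp hshift).resolve_left hsin)
  rw [eq_div_iff (mul_ne_zero (mul_ne_zero (by simp [Real.pi_ne_zero]) hz) hD)]
  apply mul_left_cancel₀ hcos
  linear_combination D * hzeta - s * riemannZeta (1 - s) * riemannZeta (1 + s) * hshift
end

section
/- Let s be a complex number and α a real number such that s ∉ {1, 0, −1, −2}, s + iα ∉ {1, 0, −1, −2}, and ζ(1−s) ≠ 0, ζ(s+2) ≠ 0, ζ(1−s−iα) ≠ 0, ζ(s+2+iα) ≠ 0. Set A = ζ(s+iα)·ζ(−1−s−iα)/(ζ(1−s−iα)·ζ(s+2+iα)) and B = ζ(s)·ζ(−1−s)/(ζ(1−s)·ζ(s+2)). Then 16π⁴·(A − B)² + α⁴ + α² = 8π²·α²·(A + B). -/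
open Complex

lemma zeta_key (s : ℂ) (hs1 : s ≠ 1) (hs0 : s ≠ 0) (hm1 : s ≠ -1) (hm2 : s ≠ -2)
    (h1 : riemannZeta (1 - s) ≠ 0) (h2 : riemannZeta (s + 2) ≠ 0) :
    4 * (Real.pi : ℂ) ^ 2 * (riemannZeta s * riemannZeta (-1 - s)) =
      -(s * (s + 1)) * (riemannZeta (1 - s) * riemannZeta (s + 2)) := by
  have hpi : (Real.pi : ℂ) ≠ 0 := ofReal_ne_zero.mpr Real.pi_ne_zero
  have h1s : (1 : ℂ) - s ≠ 0 := sub_ne_zero.mpr (Ne.symm hs1)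
  have hs2 : s + 2 ≠ 0 := by intro h; apply hm2; linear_combination h
  have hm1s : (-1 : ℂ) - s ≠ 0 := by intro h; apply hm1; linear_combination -h
  have hG1 : Gammaℝ (1 - s) ≠ 0 := by
    intro h; apply h1
    rw [riemannZeta_def_of_ne_zero h1s, h, div_zero]
  have hG2 : Gammaℝ (s + 2) ≠ 0 := by
    intro h; apply h2
    rw [riemannZeta_def_of_ne_zero hs2, h, div_zero]
  have hGs : Gammaℝ s ≠ 0 := by
    rw [Ne, Gammaℝ_eq_zero_iff]
    rintro ⟨n, rfl⟩
    rcases n with _ | _ | m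
    · exact hs0 (by norm_num)
    · exact hm2 (by norm_num)
    · apply h2
      rw [show -(2 * ((m + 2 : ℕ) : ℂ)) + 2 = -2 * ((m : ℂ) + 1) by push_cast; ring]
      exact riemannZeta_neg_two_mul_nat_add_one m
  have hGm : Gammaℝ (-1 - s) ≠ 0 := by
    rw [Ne, Gammaℝ_eq_zero_iff]
    rintro ⟨n, hn⟩
    rcases n with _ | _ | m
    · exact hm1 (by push_cast at hn; linear_combination -hn)
    · exact hs1 (by push_cast at hn; linear_combination -hn)
    · apply h1
      rw [show (1 : ℂ) - s = -2 * ((m : ℂ) + 1) by push_cast at hn ⊢; linear_combination hn]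
      exact riemannZeta_neg_two_mul_nat_add_one m
  have hL2 : completedRiemannZeta (-1 - s) = completedRiemannZeta (s + 2) := by
    have := completedRiemannZeta_one_sub (s + 2)
    rw [show 1 - (s + 2) = -1 - s by ring] at this
    exact this
  have hGa : Gammaℝ (s + 2) = Gammaℝ s * s / 2 / Real.pi := Gammaℝ_add_two hs0
  have hGb : Gammaℝ (1 - s) = Gammaℝ (-1 - s) * (-1 - s) / 2 / Real.pi := by
    have := Gammaℝ_add_two hm1s
    rw [show -1 - s + 2 = 1 - s by ring] at this
    exact this
  rw [riemannZeta_def_of_ne_zero hs0, riemannZeta_def_of_ne_zero hm1s,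
    riemannZeta_def_of_ne_zero h1s, riemannZeta_def_of_ne_zero hs2,
    completedRiemannZeta_one_sub, hL2, hGa, hGb]
  field_simp
  ring

theorem stmt_9 (s : ℂ) (α : ℝ)
    (hs : s ∉ ({1, 0, -1, -2} : Set ℂ))
    (hsa : s + Complex.I * α ∉ ({1, 0, -1, -2} : Set ℂ))
    (h1 : riemannZeta (1 - s) ≠ 0) (h2 : riemannZeta (s + 2) ≠ 0)
    (h3 : riemannZeta (1 - s - Complex.I * α) ≠ 0)
    (h4 : riemannZeta (s + 2 + Complex.I * α) ≠ 0) :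
    16 * (Real.pi : ℂ) ^ 4 *
        (riemannZeta (s + Complex.I * α) * riemannZeta (-1 - s - Complex.I * α) /
            (riemannZeta (1 - s - Complex.I * α) * riemannZeta (s + 2 + Complex.I * α)) -
          riemannZeta s * riemannZeta (-1 - s) /
            (riemannZeta (1 - s) * riemannZeta (s + 2))) ^ 2 +
        (α : ℂ) ^ 4 + (α : ℂ) ^ 2 =
      8 * (Real.pi : ℂ) ^ 2 * (α : ℂ) ^ 2 *
        (riemannZeta (s + Complex.I * α) * riemannZeta (-1 - s - Complex.I * α) /
            (riemannZeta (1 - s - Complex.I * α) * riemannZeta (s + 2 + Complex.I * α)) +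
          riemannZeta s * riemannZeta (-1 - s) /
            (riemannZeta (1 - s) * riemannZeta (s + 2))) := by
  simp only [Set.mem_insert_iff, Set.mem_singleton_iff, not_or] at hs hsa
  obtain ⟨hs1, hs0, hm1, hm2⟩ := hs
  obtain ⟨ht1, ht0, htm1, htm2⟩ := hsa
  set t : ℂ := s + Complex.I * α with ht
  have kB := zeta_key s hs1 hs0 hm1 hm2 h1 h2
  have kA := zeta_key t ht1 ht0 htm1 htm2
    (by rw [show (1 : ℂ) - t = 1 - s - Complex.I * α by rw [ht]; ring]; exact h3)
    (by rw [show t + 2 = s + 2 + Complex.I * α by rw [ht]; ring]; exact h4)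
  rw [show (1 : ℂ) - t = 1 - s - Complex.I * α by rw [ht]; ring,
    show t + 2 = s + 2 + Complex.I * α by rw [ht]; ring,
    show (-1 : ℂ) - t = -1 - s - Complex.I * α by rw [ht]; ring] at kA
  have hDB : riemannZeta (1 - s) * riemannZeta (s + 2) ≠ 0 := mul_ne_zero h1 h2
  have hDA : riemannZeta (1 - s - Complex.I * α) * riemannZeta (s + 2 + Complex.I * α) ≠ 0 :=
    mul_ne_zero h3 h4
  set A : ℂ := riemannZeta (s + Complex.I * α) * riemannZeta (-1 - s - Complex.I * α) /
      (riemannZeta (1 - s - Complex.I * α) * riemannZeta (s + 2 + Complex.I * α)) with hAdef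
  set B : ℂ := riemannZeta s * riemannZeta (-1 - s) /
      (riemannZeta (1 - s) * riemannZeta (s + 2)) with hBdef
  have hA : 4 * (Real.pi : ℂ) ^ 2 * A = -(t * (t + 1)) := by
    rw [hAdef, ← mul_div_assoc, div_eq_iff hDA]
    linear_combination kA
  have hB : 4 * (Real.pi : ℂ) ^ 2 * B = -(s * (s + 1)) := by
    rw [hBdef, ← mul_div_assoc, div_eq_iff hDB]
    linear_combination kB
  rw [ht] at hA
  linear_combination
    (4 * (Real.pi : ℂ) ^ 2 * (A - B) +
        ((-((s + Complex.I * α) * (s + Complex.I * α + 1))) - (-(s * (s + 1)))) -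
        2 * (α : ℂ) ^ 2) * hA +
    (-(4 * (Real.pi : ℂ) ^ 2 * (A - B) +
        ((-((s + Complex.I * α) * (s + Complex.I * α + 1))) - (-(s * (s + 1))))) -
        2 * (α : ℂ) ^ 2) * hB +
    ((α : ℂ) ^ 2 * (2 * s + 1) ^ 2 + 2 * Complex.I * (α : ℂ) ^ 3 * (2 * s + 1) +
        (α : ℂ) ^ 4 * (Complex.I ^ 2 + 1)) * Complex.I_sq
end

section
/- Let s be a complex number and α a real number such that s ∉ {1, 0, −1, −2, −3, −4}, s + iα ∉ {1, 0, −1, −2, −3, −4}, and ζ(−1−s−iα) ≠ 0, ζ(s+4+iα) ≠ 0, ζ(−1−s) ≠ 0, ζ(s+4) ≠ 0, ζ(−s−iα) ≠ 0, ζ(s+3+iα) ≠ 0, ζ(−s) ≠ 0, ζ(s+3) ≠ 0, ζ(1−s−iα) ≠ 0, ζ(s+2+iα) ≠ 0, ζ(1−s) ≠ 0, ζ(s+2) ≠ 0. Then 0 = ζ(s+2+iα)·ζ(−3−s−iα)/(ζ(−1−s−iα)·ζ(s+4+iα)) − ζ(s+2)·ζ(−3−s)/(ζ(−1−s)·ζ(s+4))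 − 2·ζ(s+1+iα)·ζ(−2−s−iα)/(ζ(−s−iα)·ζ(s+3+iα)) + 2·ζ(s+1)·ζ(−2−s)/(ζ(−s)·ζ(s+3)) + ζ(s+iα)·ζ(−1−s−iα)/(ζ(1−s−iα)·ζ(s+2+iα)) − ζ(s)·ζ(−1−s)/(ζ(1−s)·ζ(s+2)). -/
open Complex

lemma zeta_ratio_key (z : ℂ) (hz1 : z ≠ 1) (hz0 : z ≠ 0) (hzm1 : z ≠ -1) (hzm2 : z ≠ -2)
    (hA : riemannZeta (1 - z) ≠ 0) (hB : riemannZeta (z + 2) ≠ 0) :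
    riemannZeta z * riemannZeta (-1 - z) / (riemannZeta (1 - z) * riemannZeta (z + 2))
      = -z * (z + 1) / (4 * (Real.pi : ℂ) ^ 2) := by
  have hpi : (Real.pi : ℂ) ≠ 0 := Complex.ofReal_ne_zero.mpr Real.pi_ne_zero
  have hm1z : (-1 - z : ℂ) ≠ 0 := fun h => hzm1 (by linear_combination -h)
  have h1z : (1 - z : ℂ) ≠ 0 := fun h => hz1 (by linear_combination -h)
  have hz2 : (z + 2 : ℂ) ≠ 0 := fun h => hzm2 (by linear_combination h)
  have hg1 : Gammaℝ z ≠ 0 := by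
    intro h
    obtain ⟨n, hn⟩ := Complex.Gammaℝ_eq_zero_iff.mp h
    match n with
    | 0 => exact hz0 (by rw [hn]; norm_num)
    | 1 => exact hzm2 (by rw [hn]; norm_num)
    | (m + 2) =>
      apply hB
      have := riemannZeta_neg_two_mul_nat_add_one m
      rw [hn]
      convert this using 2
      push_cast
      ring
  have hg2 : Gammaℝ (-1 - z) ≠ 0 := by
    intro h
    obtain ⟨n, hn⟩ := Complex.Gammaℝ_eq_zero_iff.mp h
    have hn' : z = 2 * (n : ℂ) - 1 := by linear_combination -hn
    match n with
    | 0 => exact hzm1 (by rw [hn']; norm_num)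
    | 1 => exact hz1 (by rw [hn']; norm_num)
    | (m + 2) =>
      apply hA
      have := riemannZeta_neg_two_mul_nat_add_one m
      rw [hn']
      convert this using 2
      push_cast
      ring
  have e1 : Gammaℝ (1 - z) = Gammaℝ (-1 - z) * (-1 - z) / 2 / (Real.pi : ℂ) := by
    have := Complex.Gammaℝ_add_two hm1z
    rw [show (-1 - z + 2 : ℂ) = 1 - z by ring] at this
    exact this
  have e2 : Gammaℝ (z + 2) = Gammaℝ z * z / 2 / (Real.pi : ℂ) := Complex.Gammaℝ_add_two hz0
  have hG1z : Gammaℝ (1 - z) ≠ 0 := by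
    rw [e1]; exact div_ne_zero (div_ne_zero (mul_ne_zero hg2 hm1z) two_ne_zero) hpi
  have hGz2 : Gammaℝ (z + 2) ≠ 0 := by
    rw [e2]; exact div_ne_zero (div_ne_zero (mul_ne_zero hg1 hz0) two_ne_zero) hpi
  have w1 : riemannZeta z = completedRiemannZeta z / Gammaℝ z := riemannZeta_def_of_ne_zero hz0
  have w3 : riemannZeta (1 - z) = completedRiemannZeta z / Gammaℝ (1 - z) := by
    rw [riemannZeta_def_of_ne_zero h1z, completedRiemannZeta_one_sub]
  have w4 : riemannZeta (z + 2) = completedRiemannZeta (z + 2) / Gammaℝ (z + 2) :=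
    riemannZeta_def_of_ne_zero hz2
  have w2 : riemannZeta (-1 - z) = completedRiemannZeta (z + 2) / Gammaℝ (-1 - z) := by
    rw [riemannZeta_def_of_ne_zero hm1z, show (-1 - z : ℂ) = 1 - (z + 2) by ring,
      completedRiemannZeta_one_sub]
  have ha : completedRiemannZeta z ≠ 0 := by
    intro h; apply hA; rw [w3, h, zero_div]
  have hb : completedRiemannZeta (z + 2) ≠ 0 := by
    intro h; apply hB; rw [w4, h, zero_div]
  rw [div_eq_div_iff (mul_ne_zero hA hB) (mul_ne_zero (by norm_num) (pow_ne_zero 2 hpi))]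
  rw [w1, w2, w3, w4, e1, e2]
  field_simp
  ring

theorem stmt_12 (s : ℂ) (α : ℝ)
    (hs : s ∉ ({1, 0, -1, -2, -3, -4} : Set ℂ))
    (hsa : s + Complex.I * α ∉ ({1, 0, -1, -2, -3, -4} : Set ℂ))
    (h1 : riemannZeta (-1 - s - Complex.I * α) ≠ 0)
    (h2 : riemannZeta (s + 4 + Complex.I * α) ≠ 0)
    (h3 : riemannZeta (-1 - s) ≠ 0) (h4 : riemannZeta (s + 4) ≠ 0)
    (h5 : riemannZeta (-s - Complex.I * α) ≠ 0)
    (h6 : riemannZeta (s + 3 + Complex.I * α) ≠ 0)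
    (h7 : riemannZeta (-s) ≠ 0) (h8 : riemannZeta (s + 3) ≠ 0)
    (h9 : riemannZeta (1 - s - Complex.I * α) ≠ 0)
    (h10 : riemannZeta (s + 2 + Complex.I * α) ≠ 0)
    (h11 : riemannZeta (1 - s) ≠ 0) (h12 : riemannZeta (s + 2) ≠ 0) :
    0 =
      riemannZeta (s + 2 + Complex.I * α) * riemannZeta (-3 - s - Complex.I * α) /
          (riemannZeta (-1 - s - Complex.I * α) * riemannZeta (s + 4 + Complex.I * α)) -
        riemannZeta (s + 2) * riemannZeta (-3 - s) /
          (riemannZeta (-1 - s) * riemannZeta (s + 4)) -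
        2 * (riemannZeta (s + 1 + Complex.I * α) * riemannZeta (-2 - s - Complex.I * α)) /
          (riemannZeta (-s - Complex.I * α) * riemannZeta (s + 3 + Complex.I * α)) +
        2 * (riemannZeta (s + 1) * riemannZeta (-2 - s)) /
          (riemannZeta (-s) * riemannZeta (s + 3)) +
        riemannZeta (s + Complex.I * α) * riemannZeta (-1 - s - Complex.I * α) /
          (riemannZeta (1 - s - Complex.I * α) * riemannZeta (s + 2 + Complex.I * α)) -
        riemannZeta s * riemannZeta (-1 - s) /
          (riemannZeta (1 - s) * riemannZeta (s + 2)) := by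
  simp only [Set.mem_insert_iff, Set.mem_singleton_iff, not_or] at hs hsa
  obtain ⟨hs1, hs0, hsm1, hsm2, hsm3, hsm4⟩ := hs
  obtain ⟨ha1, ha0, ham1, ham2, ham3, ham4⟩ := hsa
  set w := s + Complex.I * (α : ℂ) with hw
  have hpi : (Real.pi : ℂ) ≠ 0 := Complex.ofReal_ne_zero.mpr Real.pi_ne_zero
  -- Term 1: z = w + 2
  have T1 : riemannZeta (s + 2 + Complex.I * α) * riemannZeta (-3 - s - Complex.I * α) /
      (riemannZeta (-1 - s - Complex.I * α) * riemannZeta (s + 4 + Complex.I * α))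
      = -(w + 2) * ((w + 2) + 1) / (4 * (Real.pi : ℂ) ^ 2) := by
    have key := zeta_ratio_key (w + 2)
      (fun h => ham1 (by linear_combination h)) (fun h => ham2 (by linear_combination h))
      (fun h => ham3 (by linear_combination h)) (fun h => ham4 (by linear_combination h))
      (by rw [show (1 - (w + 2) : ℂ) = -1 - s - Complex.I * α by rw [hw]; ring]; exact h1)
      (by rw [show (w + 2 + 2 : ℂ) = s + 4 + Complex.I * α by rw [hw]; ring]; exact h2)
    rw [show (s + 2 + Complex.I * (α : ℂ)) = w + 2 by rw [hw]; ring,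
      show (-3 - s - Complex.I * (α : ℂ)) = -1 - (w + 2) by rw [hw]; ring,
      show (-1 - s - Complex.I * (α : ℂ)) = 1 - (w + 2) by rw [hw]; ring,
      show (s + 4 + Complex.I * (α : ℂ)) = (w + 2) + 2 by rw [hw]; ring]
    exact key
  have T2 : riemannZeta (s + 2) * riemannZeta (-3 - s) /
      (riemannZeta (-1 - s) * riemannZeta (s + 4))
      = -(s + 2) * ((s + 2) + 1) / (4 * (Real.pi : ℂ) ^ 2) := by
    have key := zeta_ratio_key (s + 2)
      (fun h => hsm1 (by linear_combination h)) (fun h => hsm2 (by linear_combination h))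
      (fun h => hsm3 (by linear_combination h)) (fun h => hsm4 (by linear_combination h))
      (by rw [show (1 - (s + 2) : ℂ) = -1 - s by ring]; exact h3)
      (by rw [show (s + 2 + 2 : ℂ) = s + 4 by ring]; exact h4)
    rw [show (-3 - s : ℂ) = -1 - (s + 2) by ring,
      show (-1 - s : ℂ) = 1 - (s + 2) by ring,
      show (s + 4 : ℂ) = (s + 2) + 2 by ring]
    exact key
  have T3 : riemannZeta (s + 1 + Complex.I * α) * riemannZeta (-2 - s - Complex.I * α) /
      (riemannZeta (-s - Complex.I * α) * riemannZeta (s + 3 + Complex.I * α))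
      = -(w + 1) * ((w + 1) + 1) / (4 * (Real.pi : ℂ) ^ 2) := by
    have key := zeta_ratio_key (w + 1)
      (fun h => ha0 (by linear_combination h)) (fun h => ham1 (by linear_combination h))
      (fun h => ham2 (by linear_combination h)) (fun h => ham3 (by linear_combination h))
      (by rw [show (1 - (w + 1) : ℂ) = -s - Complex.I * α by rw [hw]; ring]; exact h5)
      (by rw [show (w + 1 + 2 : ℂ) = s + 3 + Complex.I * α by rw [hw]; ring]; exact h6)
    rw [show (s + 1 + Complex.I * (α : ℂ)) = w + 1 by rw [hw]; ring,
      show (-2 - s - Complex.I * (α : ℂ)) = -1 - (w + 1) by rw [hw]; ring,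
      show (-s - Complex.I * (α : ℂ)) = 1 - (w + 1) by rw [hw]; ring,
      show (s + 3 + Complex.I * (α : ℂ)) = (w + 1) + 2 by rw [hw]; ring]
    exact key
  have T4 : riemannZeta (s + 1) * riemannZeta (-2 - s) /
      (riemannZeta (-s) * riemannZeta (s + 3))
      = -(s + 1) * ((s + 1) + 1) / (4 * (Real.pi : ℂ) ^ 2) := by
    have key := zeta_ratio_key (s + 1)
      (fun h => hs0 (by linear_combination h)) (fun h => hsm1 (by linear_combination h))
      (fun h => hsm2 (by linear_combination h)) (fun h => hsm3 (by linear_combination h))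
      (by rw [show (1 - (s + 1) : ℂ) = -s by ring]; exact h7)
      (by rw [show (s + 1 + 2 : ℂ) = s + 3 by ring]; exact h8)
    rw [show (-2 - s : ℂ) = -1 - (s + 1) by ring,
      show (-s : ℂ) = 1 - (s + 1) by ring,
      show (s + 3 : ℂ) = (s + 1) + 2 by ring]
    exact key
  have T5 : riemannZeta (s + Complex.I * α) * riemannZeta (-1 - s - Complex.I * α) /
      (riemannZeta (1 - s - Complex.I * α) * riemannZeta (s + 2 + Complex.I * α))
      = -w * (w + 1) / (4 * (Real.pi : ℂ) ^ 2) := by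
    have key := zeta_ratio_key w ha1 ha0 ham1 ham2
      (by rw [show (1 - w : ℂ) = 1 - s - Complex.I * α by rw [hw]; ring]; exact h9)
      (by rw [show (w + 2 : ℂ) = s + 2 + Complex.I * α by rw [hw]; ring]; exact h10)
    rw [show (-1 - s - Complex.I * (α : ℂ)) = -1 - w by rw [hw]; ring,
      show (1 - s - Complex.I * (α : ℂ)) = 1 - w by rw [hw]; ring,
      show (s + 2 + Complex.I * (α : ℂ)) = w + 2 by rw [hw]; ring]
    exact key
  have T6 : riemannZeta s * riemannZeta (-1 - s) /
      (riemannZeta (1 - s) * riemannZeta (s + 2))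
      = -s * (s + 1) / (4 * (Real.pi : ℂ) ^ 2) := by
    exact zeta_ratio_key s hs1 hs0 hsm1 hsm2 h11 h12
  rw [mul_div_assoc 2, mul_div_assoc 2, T1, T2, T3, T4, T5, T6]
  field_simp
  ring
end

section
/- For every natural number m and every complex number s with s ∉ {−1, −2, 2m, 2m+1}, one has s·(s+1)·( ∏_{j=1}^{2m} (s−j) )·ζ(s+2)·ζ(2m+1−s) = (−1)^(m+1)·(4π²)^(m+1)·ζ(s−2m)·ζ(−1−s), where the product ∏_{j=1}^{2m}(s−j) = (s−1)(s−2)⋯(s−2m) (an empty product equal to 1 when m = 0). -/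
/-!
Away from the integers all four Gamma factors `Gammaℝ (s + 2)`, `Gammaℝ (-1 - s)`,
`Gammaℝ (s - 2m)`, `Gammaℝ (2m + 1 - s)` are nonzero. The functional equation
`Λ(w) = Λ(1 - w)` for `Λ = ζ · Gammaℝ` pairs `s + 2` with `-1 - s` and `s - 2m` with `2m + 1 - s`,
and `Gammaℝ (w + 2) = Gammaℝ w · w / (2π)`, iterated `m + 1` times, turns the quotient of Gamma
factors into the polynomial `(-1)^(m+1) s (s+1) ∏ (s - j) / (4π²)^(m+1)`. Both sides are
holomorphic off `{-1, -2, 2m, 2m+1}`, where one of the zeta arguments hits the pole at `1`; this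
set has connected complement, so the identity theorem extends the equality from the non-integers.
-/

open Complex Finset
open scoped Real

@[fun_prop]
lemma DifferentiableAt.riemannZeta {f : ℂ → ℂ} {z : ℂ} (hf : DifferentiableAt ℂ f z)
    (h : f z ≠ 1) : DifferentiableAt ℂ (fun w => riemannZeta (f w)) z :=
  (differentiableAt_riemannZeta h).comp z hf

lemma Gammaℝ_ne_zero_of_forall_ne_intCast {w : ℂ} (hw : ∀ n : ℤ, w ≠ n) : Gammaℝ w ≠ 0 := by
  rw [Ne, Gammaℝ_eq_zero_iff]
  rintro ⟨n, rfl⟩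
  exact hw (-(2 * n)) (by push_cast; ring)

lemma riemannZeta_mul_Gammaℝ_eq_of_add_eq_one {w w' : ℂ} (h : w + w' = 1) (hw : Gammaℝ w ≠ 0)
    (hw' : Gammaℝ w' ≠ 0) : riemannZeta w' * Gammaℝ w' = riemannZeta w * Gammaℝ w := by
  obtain rfl : w' = 1 - w := by linear_combination h
  have ne_zero {z : ℂ} (hz : Gammaℝ z ≠ 0) : z ≠ 0 := by
    rintro rfl
    exact hz (Gammaℝ_eq_zero_iff.mpr ⟨0, by simp⟩)
  rw [riemannZeta_def_of_ne_zero (ne_zero hw), riemannZeta_def_of_ne_zero (ne_zero hw'),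
    div_mul_cancel₀ _ hw, div_mul_cancel₀ _ hw', completedRiemannZeta_one_sub]

lemma two_pi_pow_mul_Gammaℝ_add_two_mul {w : ℂ} {n : ℕ} (hw : ∀ k < n, w + 2 * k ≠ 0) :
    (2 * π) ^ n * Gammaℝ (w + 2 * n) = Gammaℝ w * ∏ k ∈ range n, (w + 2 * k) := by
  induction n with
  | zero => simp
  | succ n ih =>
    have hπ : (π : ℂ) ≠ 0 := ofReal_ne_zero.mpr Real.pi_ne_zero
    have ih := ih fun k hk => hw k (hk.trans n.lt_succ_self)
    rw [show w + 2 * ((n + 1 : ℕ) : ℂ) = w + 2 * n + 2 by push_cast; ring,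
      Gammaℝ_add_two (hw n n.lt_succ_self), prod_range_succ, pow_succ]
    field_simp
    linear_combination (w + 2 * n) * ih

lemma mul_mul_prod_Icc_sub (s : ℂ) (m : ℕ) :
    s * (s + 1) * ∏ j ∈ Icc 1 (2 * m), (s - j) =
      (-1) ^ (m + 1) * ((∏ k ∈ range (m + 1), (s - 2 * m + 2 * k)) *
        ∏ k ∈ range (m + 1), (-1 - s + 2 * k)) := by
  induction m with
  | zero =>
    simp only [mul_zero, Order.lt_one_iff, Icc_eq_empty_of_lt, prod_empty, mul_one, zero_add,
      pow_one, range_one, CharP.cast_eq_zero, sub_zero, prod_singleton, add_zero]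
    ring
  | succ m ih =>
    have h_even : ∏ k ∈ range (m + 2), (s - 2 * ((m + 1 : ℕ) : ℂ) + 2 * k) =
        (∏ k ∈ range (m + 1), (s - 2 * m + 2 * k)) * (s - 2 * m - 2) := by
      rw [prod_range_succ']
      push_cast
      congr 1
      · exact prod_congr rfl fun k _ => by ring
      · ring
    have h_odd : ∏ k ∈ range (m + 2), (-1 - s + 2 * (k : ℂ)) =
        (∏ k ∈ range (m + 1), (-1 - s + 2 * k)) * (2 * m + 1 - s) := by
      rw [prod_range_succ]
      push_cast
      ring
    have h_Icc : ∏ j ∈ Icc 1 (2 * (m + 1)), (s - j) =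
        (∏ j ∈ Icc 1 (2 * m), (s - j)) * (s - (2 * m + 1)) * (s - (2 * m + 2)) := by
      rw [show 2 * (m + 1) = 2 * m + 1 + 1 by ring,
        prod_Icc_succ_top (by omega), prod_Icc_succ_top (by omega)]
      push_cast
      ring
    rw [h_even, h_odd, h_Icc]
    linear_combination (s - 2 * m - 2) * (s - 2 * m - 1) * ih

theorem riemannZeta_recursion_of_forall_ne_intCast (m : ℕ) {s : ℂ} (hs : ∀ n : ℤ, s ≠ n) :
    s * (s + 1) * (∏ j ∈ Icc 1 (2 * m), (s - j)) *
        riemannZeta (s + 2) * riemannZeta (2 * m + 1 - s) =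
      (-1) ^ (m + 1) * (4 * (π : ℂ) ^ 2) ^ (m + 1) *
        riemannZeta (s - 2 * m) * riemannZeta (-1 - s) := by
  have shift (c : ℤ) (n : ℤ) : s + c ≠ n := fun h => hs (n - c) (by push_cast; linear_combination h)
  have reflect (c : ℤ) (n : ℤ) : c - s ≠ n := fun h => hs (c - n) (by push_cast; linear_combination -h)
  have hA : Gammaℝ (s + 2) ≠ 0 := Gammaℝ_ne_zero_of_forall_ne_intCast (by simpa using shift 2)
  have hB : Gammaℝ (-1 - s) ≠ 0 := Gammaℝ_ne_zero_of_forall_ne_intCast (by simpa using reflect (-1))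
  have hC : Gammaℝ (s - 2 * m) ≠ 0 :=
    Gammaℝ_ne_zero_of_forall_ne_intCast (by simpa [sub_eq_add_neg] using shift (-2 * m))
  have hD : Gammaℝ (2 * m + 1 - s) ≠ 0 :=
    Gammaℝ_ne_zero_of_forall_ne_intCast (by simpa using reflect (2 * m + 1))
  have hAB : riemannZeta (-1 - s) * Gammaℝ (-1 - s) = riemannZeta (s + 2) * Gammaℝ (s + 2) :=
    riemannZeta_mul_Gammaℝ_eq_of_add_eq_one (by ring) hA hB
  have hCD : riemannZeta (2 * m + 1 - s) * Gammaℝ (2 * m + 1 - s) =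
      riemannZeta (s - 2 * m) * Gammaℝ (s - 2 * m) :=
    riemannZeta_mul_Gammaℝ_eq_of_add_eq_one (by ring) hC hD
  have hCA := two_pi_pow_mul_Gammaℝ_add_two_mul (w := s - 2 * m) (n := m + 1)
    fun k _ h => shift (2 * k - 2 * m) 0 (by push_cast; linear_combination h)
  have hBD := two_pi_pow_mul_Gammaℝ_add_two_mul (w := -1 - s) (n := m + 1)
    fun k _ h => reflect (-1 + 2 * k) 0 (by push_cast; linear_combination h)
  rw [show s - 2 * m + 2 * ((m + 1 : ℕ) : ℂ) = s + 2 by push_cast; ring] at hCA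
  rw [show -1 - s + 2 * ((m + 1 : ℕ) : ℂ) = 2 * m + 1 - s by push_cast; ring] at hBD
  set P₁ := ∏ k ∈ range (m + 1), (s - 2 * m + 2 * k)
  set P₂ := ∏ k ∈ range (m + 1), (-1 - s + 2 * k)
  set T := (2 * (π : ℂ)) ^ (m + 1)
  refine mul_right_cancel₀ (mul_ne_zero hA hD) ?_
  rw [mul_mul_prod_Icc_sub, show (4 * (π : ℂ) ^ 2) ^ (m + 1) = T * T by rw [← mul_pow]; ring]
  linear_combination (-1) ^ (m + 1) * P₁ * P₂ * (riemannZeta (s + 2) * Gammaℝ (s + 2) * hCD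
    - riemannZeta (s - 2 * m) * Gammaℝ (s - 2 * m) * hAB)
    - (-1) ^ (m + 1) * riemannZeta (s - 2 * m) * riemannZeta (-1 - s) *
      (T * Gammaℝ (s + 2) * hBD + Gammaℝ (-1 - s) * P₂ * hCA)

theorem stmt_15 (m : ℕ) (s : ℂ)
    (hs : s ∉ ({-1, -2, 2 * (m : ℂ), 2 * (m : ℂ) + 1} : Set ℂ)) :
    s * (s + 1) * (∏ j ∈ Finset.Icc 1 (2 * m), (s - (j : ℂ))) *
        riemannZeta (s + 2) * riemannZeta (2 * (m : ℂ) + 1 - s) =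
      (-1) ^ (m + 1) * (4 * (Real.pi : ℂ) ^ 2) ^ (m + 1) *
        riemannZeta (s - 2 * (m : ℂ)) * riemannZeta (-1 - s) := by
  set E : Set ℂ := {-1, -2, 2 * (m : ℂ), 2 * (m : ℂ) + 1}
  have hE : E.Finite := Set.toFinite E
  have hU : IsPreconnected Eᶜ :=
    (hE.countable.isConnected_compl_of_one_lt_rank (by simp [rank_real_complex])).isPreconnected
  have analytic {F : ℂ → ℂ} (hF : ∀ z : ℂ, z ≠ -1 → z ≠ -2 → z ≠ 2 * m → z ≠ 2 * m + 1 →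
      DifferentiableAt ℂ F z) : AnalyticOnNhd ℂ F Eᶜ := by
    refine DifferentiableOn.analyticOnNhd (fun z hz => DifferentiableAt.differentiableWithinAt ?_)
      hE.isClosed.isOpen_compl
    simp only [E, Set.mem_compl_iff, Set.mem_insert_iff, Set.mem_singleton_iff, not_or] at hz
    exact hF z hz.1 hz.2.1 hz.2.2.1 hz.2.2.2
  have hI : I ∉ E := by simp [E, Complex.ext_iff]
  revert s
  refine (analytic fun z _ _ _ _ => ?_).eqOn_of_preconnected_of_eventuallyEq
    (analytic fun z _ _ _ _ => ?_) hU hI ?_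
  · fun_prop (disch := grind)
  · fun_prop (disch := grind)
  filter_upwards [(continuous_im.isOpen_preimage _ isOpen_ne).mem_nhds (by simp : I.im ≠ 0)] with z hz
  exact riemannZeta_recursion_of_forall_ne_intCast m fun n h => hz (by simp [h])
end

section
/- For every natural number n and every complex number s with cos(πs/2) ≠ 0 and s ∉ {1, 0, −n, −n−1}, one has (2π)^(n+1)·ζ(s)·ζ(−s−n) = ( ∏_{k=0}^{n} (s+k) )·α_n(s)·ζ(1−s)·ζ(n+1+s), where α_n(s) = (1/2)·[ i^n·tan(πs/2)·((−1)^(n+1) − 1) + i^(n+3)·((−1)^n − 1) ]. -/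
open Complex Finset

private lemma cos_add_nat_mul_pi (x : ℂ) (m : ℕ) :
    Complex.cos (x + m * (Real.pi : ℂ)) = (-1) ^ m * Complex.cos x := by
  induction m with
  | zero => simp
  | succ k ih =>
    have : x + (k + 1 : ℕ) * (Real.pi : ℂ) = (x + k * (Real.pi : ℂ)) + Real.pi := by
      push_cast; ring
    rw [this, Complex.cos_add_pi, ih, pow_succ]; ring

private lemma gamma_prod (n : ℕ) (s : ℂ) (h : ∀ m : ℕ, s ≠ -(m : ℂ)) :
    Complex.Gamma ((n : ℂ) + 1 + s) = Complex.Gamma s * ∏ k ∈ Finset.range (n + 1), (s + (k : ℂ)) := by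
  induction n with
  | zero =>
    have h0 : s ≠ 0 := by simpa using h 0
    rw [show ((0:ℕ) : ℂ) + 1 + s = s + 1 by push_cast; ring, Complex.Gamma_add_one s h0,
      Finset.prod_range_one]
    push_cast; ring
  | succ k ih =>
    have hk : (k : ℂ) + 1 + s ≠ 0 := by
      intro hc
      exact h (k + 1) (by push_cast; linear_combination hc)
    rw [Finset.prod_range_succ, show ((k+1:ℕ) : ℂ) + 1 + s = ((k : ℂ) + 1 + s) + 1 by push_cast; ring,
      Complex.Gamma_add_one _ hk, ih]
    push_cast; ring

private lemma key_cos (n : ℕ) (s : ℂ) (hcos : Complex.cos ((Real.pi : ℂ) * s / 2) ≠ 0) :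
    Complex.cos ((Real.pi : ℂ) * ((n : ℂ) + 1 + s) / 2) =
      (1 / 2 *
          (Complex.I ^ n * Complex.tan ((Real.pi : ℂ) * s / 2) * ((-1) ^ (n + 1) - 1) +
            Complex.I ^ (n + 3) * ((-1) ^ n - 1))) * Complex.cos ((Real.pi : ℂ) * s / 2) := by
  rcases Nat.even_or_odd n with he | ho
  · obtain ⟨m, rfl⟩ := he
    simp only [← two_mul]
    have harg : (Real.pi : ℂ) * ((2 * m : ℕ) + 1 + s) / 2
        = ((Real.pi : ℂ) * s / 2 + (Real.pi : ℂ) / 2) + m * (Real.pi : ℂ) := by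
      push_cast; ring
    have htan : Complex.tan ((Real.pi : ℂ) * s / 2) * Complex.cos ((Real.pi : ℂ) * s / 2)
        = Complex.sin ((Real.pi : ℂ) * s / 2) := by
      rw [Complex.tan_eq_sin_div_cos, div_mul_cancel₀ _ hcos]
    have hI : Complex.I ^ (2 * m) = (-1 : ℂ) ^ m := by rw [pow_mul, Complex.I_sq]
    have h1 : ((-1 : ℂ)) ^ (2 * m + 1) = -1 := by rw [pow_succ, pow_mul]; norm_num
    have h2 : ((-1 : ℂ)) ^ (2 * m) = 1 := by rw [pow_mul]; norm_num
    rw [harg, cos_add_nat_mul_pi, Complex.cos_add_pi_div_two, hI, h1, h2]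
    linear_combination (-1 : ℂ) ^ m * htan
  · obtain ⟨m, rfl⟩ := ho
    have harg : (Real.pi : ℂ) * ((2 * m + 1 : ℕ) + 1 + s) / 2
        = ((Real.pi : ℂ) * s / 2) + (m + 1 : ℕ) * (Real.pi : ℂ) := by
      push_cast; ring
    have hI : Complex.I ^ (2 * m + 1 + 3) = (-1 : ℂ) ^ m := by
      rw [show 2*m+1+3 = 2*(m+2) by ring, pow_mul, Complex.I_sq, pow_add]; norm_num
    have h1 : ((-1 : ℂ)) ^ (2 * m + 1 + 1) = 1 := by
      rw [show 2*m+1+1 = 2*(m+1) by ring, pow_mul]; norm_num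
    have h2 : ((-1 : ℂ)) ^ (2 * m + 1) = -1 := by rw [pow_succ, pow_mul]; norm_num
    rw [harg, cos_add_nat_mul_pi, hI, h1, h2, pow_succ]
    ring

theorem stmt_16 (n : ℕ) (s : ℂ)
    (hcos : Complex.cos ((Real.pi : ℂ) * s / 2) ≠ 0)
    (hs : s ∉ ({1, 0, -(n : ℂ), -((n : ℂ) + 1)} : Set ℂ)) :
    (2 * (Real.pi : ℂ)) ^ (n + 1) * riemannZeta s * riemannZeta (-s - (n : ℂ)) =
      (∏ k ∈ Finset.range (n + 1), (s + (k : ℂ))) *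
        (1 / 2 *
          (Complex.I ^ n * Complex.tan ((Real.pi : ℂ) * s / 2) * ((-1) ^ (n + 1) - 1) +
            Complex.I ^ (n + 3) * ((-1) ^ n - 1))) *
        riemannZeta (1 - s) * riemannZeta ((n : ℂ) + 1 + s) := by
  simp only [Set.mem_insert_iff, Set.mem_singleton_iff, not_or] at hs
  obtain ⟨hs1, hs0, hsn, hsn1⟩ := hs
  by_cases h : ∀ m : ℕ, s ≠ -(m : ℂ)
  · -- generic case: apply the functional equation twice
    have hA := riemannZeta_one_sub h hs1
    have hW : ∀ m : ℕ, (n : ℂ) + 1 + s ≠ -(m : ℂ) := by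
      intro m hc
      exact h (n + 1 + m) (by push_cast; linear_combination hc)
    have hW1 : (n : ℂ) + 1 + s ≠ 1 := by
      intro hc; exact hsn (by linear_combination hc)
    have hB := riemannZeta_one_sub hW hW1
    rw [show -s - (n : ℂ) = 1 - ((n : ℂ) + 1 + s) by ring, hB, hA,
      gamma_prod n s h, key_cos n s hcos]
    have h2pi : (2 * (Real.pi : ℂ)) ≠ 0 := by
      simp [Real.pi_ne_zero, Complex.ofReal_ne_zero]
    have hpow : (2 * (Real.pi : ℂ)) ^ (n + 1) * (2 * (Real.pi : ℂ)) ^ (-((n : ℂ) + 1 + s))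
        = (2 * (Real.pi : ℂ)) ^ (-s) := by
      rw [← Complex.cpow_natCast, ← Complex.cpow_add _ _ h2pi]
      congr 1; push_cast; ring
    linear_combination (2 * riemannZeta s * riemannZeta ((n : ℂ) + 1 + s) * Complex.Gamma s *
      (∏ k ∈ Finset.range (n + 1), (s + (k : ℂ))) *
      (1 / 2 *
          (Complex.I ^ n * Complex.tan ((Real.pi : ℂ) * s / 2) * ((-1) ^ (n + 1) - 1) +
            Complex.I ^ (n + 3) * ((-1) ^ n - 1))) *
      Complex.cos ((Real.pi : ℂ) * s / 2)) * hpow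
  · -- s is a nonpositive integer
    push_neg at h
    obtain ⟨m, rfl⟩ := h
    rcases Nat.even_or_odd m with hme | hmo
    swap
    · -- m odd contradicts hcos
      obtain ⟨j, rfl⟩ := hmo
      exfalso; apply hcos
      rw [show (Real.pi : ℂ) * -((2 * j + 1 : ℕ) : ℂ) / 2
          = -((Real.pi : ℂ) / 2 + (j : ℂ) * (Real.pi : ℂ)) by push_cast; ring,
        Complex.cos_neg, cos_add_nat_mul_pi, Complex.cos_pi_div_two, mul_zero]
    obtain ⟨j, rfl⟩ := hme
    simp only [← two_mul] at *
    have hj0 : j ≠ 0 := fun hc => hs0 (by simp [hc])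
    obtain ⟨j', rfl⟩ : ∃ j', j = j' + 1 := ⟨j - 1, by omega⟩
    have hzeta : riemannZeta (-((2 * (j' + 1) : ℕ) : ℂ)) = 0 := by
      rw [show -(((2 * (j' + 1) : ℕ)) : ℂ) = -2 * ((j' : ℂ) + 1) by push_cast; ring]
      exact riemannZeta_neg_two_mul_nat_add_one j'
    rw [hzeta]
    rcases le_or_gt (2 * (j' + 1)) n with hle | hgt
    · -- product contains a zero factor
      have hprod : (∏ k ∈ Finset.range (n + 1), (-((2 * (j' + 1) : ℕ) : ℂ) + (k : ℂ))) = 0 :=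
        Finset.prod_eq_zero (i := 2 * (j' + 1)) (Finset.mem_range.mpr (by omega))
          (by push_cast; ring)
      rw [hprod]; ring
    · -- m ≥ n + 2
      have hmn1 : 2 * (j' + 1) ≠ n + 1 := by
        intro hc; apply hsn1; rw [hc]; push_cast; ring
      have hge : n + 2 ≤ 2 * (j' + 1) := by omega
      rcases Nat.even_or_odd n with hne | hno
      · -- n even : the alpha factor vanishes
        obtain ⟨r, rfl⟩ := hne
        simp only [← two_mul]
        have htan : Complex.tan ((Real.pi : ℂ) * -((2 * (j' + 1) : ℕ) : ℂ) / 2) = 0 := by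
          rw [show (Real.pi : ℂ) * -((2 * (j' + 1) : ℕ) : ℂ) / 2
              = -(((j' + 1 : ℕ) : ℂ) * (Real.pi : ℂ)) by push_cast; ring,
            Complex.tan_eq_sin_div_cos, Complex.sin_neg, Complex.sin_nat_mul_pi]
          simp
        have hn1 : ((-1 : ℂ)) ^ (2 * r) = 1 := by rw [pow_mul]; norm_num
        rw [htan, hn1]; ring
      · -- n odd : ζ(n+1+s) = 0
        obtain ⟨r, rfl⟩ := hno
        have ht : ∃ t : ℕ, 2 * (j' + 1) = (2 * r + 1) + 1 + 2 * (t + 1) := by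
          refine ⟨(2 * (j' + 1) - (2 * r + 1) - 1) / 2 - 1, by omega⟩
        obtain ⟨t, ht⟩ := ht
        have hz2 : riemannZeta (((2 * r + 1 : ℕ) : ℂ) + 1 + -((2 * (j' + 1) : ℕ) : ℂ)) = 0 := by
          rw [show ((2 * r + 1 : ℕ) : ℂ) + 1 + -((2 * (j' + 1) : ℕ) : ℂ) = -2 * ((t : ℂ) + 1) by
            rw [show (2 * (j' + 1) : ℕ) = (2 * r + 1) + 1 + 2 * (t + 1) from ht]; push_cast; ring]
          exact riemannZeta_neg_two_mul_nat_add_one t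
        rw [hz2]; ring
end
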